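/- arXiv:1107.4019 — 5 statements merged into one kernel-verified Lean document; each statement's English description precedes it below -/
import Mathlib

section
/- Let n ≥ 2 be an integer and set M = 2·n²·(n+1)·C(3n−1, n). Let F(t) ∈ (ℂ[x])[t] be a monic polynomial of degree n in the variable t with coefficients in ℂ[x]. If F(λ) is an n-th power in ℂ[x] for every integer λ = 1, 2, …, M (where λ is viewed as the constant polynomial λ), then either all the coefficients of F lie in ℂ (i.e. F ∈ ℂ[t]), or there exists ν ∈ ℂ[x] such that F(t) = (t + ν)^n. -/
/-!
If every coefficient of `F` is constant there is nothing to prove. Otherwise factor the monic `F`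
into monic irreducibles and let `q` be a factor of maximal degree `δ ≥ 1` in `x`, so that
`F = q ^ k * G` with `q ∤ G`. If `n ∣ k`, comparing degrees in `t` forces `F = q ^ n` with `q`
linear in `t`.

If `n ∤ k`, let `F(c) = v ^ n`. A simple root of `q(c)` that is not a root of `G(c)` would have
multiplicity `k` in `F(c)`, so every root of `q(c)` is a root of `r(c)`, where `r = G · ∂q/∂x`,
and the multiple ones are roots of `∂q/∂x (c)`; hence `deg q(c) ≤ 2 deg gcd(q(c), r(c))`. For all
but `deg_t q` values of `c` the left side is `δ`. On the other hand `q ∤ r`, as `∂q/∂x` has smaller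
degree in `t` than `q`, so the resultant `Res_t(q, r) ∈ ℂ[x]` is nonzero. It is divisible by every
`gcd(q(c), r(c))`, and each of its roots `a` is a root of `q(c)` for at most `deg_t q` values of
`c`, because `q(·, a)` is monic of that degree. Summing over `c` bounds the number of `c` with
`F(c)` an `n`-th power by a cubic in `n`, which `M` exceeds.
-/

open Polynomial

namespace Polynomial

open Bivariate

section Swap

/-! `swap` exchanges the two variables of `R[X][X]`: `(swap p).natDegree` is the degree of `p` in
the inner variable, and `swap (derivative (swap p))` is the derivative with respect to it. -/

variable {R : Type*} [CommRing R]

theorem coeff_coeff_swap (p : R[X][X]) (i j : ℕ) :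
    ((swap p).coeff i).coeff j = (p.coeff j).coeff i := by
  induction p using Polynomial.induction_on' with
  | add p q hp hq => simp [hp, hq]
  | monomial n a =>
    induction a using Polynomial.induction_on' with
    | add a b ha hb => simp_all [map_add]
    | monomial m r =>
      rw [swap_monomial_monomial]
      simp only [coeff_monomial]
      split_ifs <;> simp_all [coeff_monomial]

theorem eval_C_eq_map_swap (p : R[X][X]) (c : R) :
    p.eval (C c) = (swap p).map (evalRingHom c) := by
  change evalRingHom (C c) p = (mapRingHom (evalRingHom c)).comp swap.toRingHom p
  congr 1
  apply ringHom_ext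
  · intro a
    have : (evalRingHom c).comp C = RingHom.id R := RingHom.ext fun _ => eval_C
    simp [swap_C, map_map, this]
  · simp [swap_Y]

theorem natDegree_coeff_le_natDegree_swap (p : R[X][X]) (i : ℕ) :
    (p.coeff i).natDegree ≤ (swap p).natDegree :=
  natDegree_le_iff_coeff_eq_zero.mpr fun j hj => by
    rw [← coeff_coeff_swap, coeff_eq_zero_of_natDegree_lt hj, coeff_zero]

theorem natDegree_leadingCoeff_swap_le (p : R[X][X]) :
    (swap p).leadingCoeff.natDegree ≤ p.natDegree := by
  simpa [swap_swap_apply] using natDegree_coeff_le_natDegree_swap (swap p) (swap p).natDegree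

theorem natDegree_eval_C_eq (p : R[X][X]) {c : R} (hc : (swap p).leadingCoeff.eval c ≠ 0) :
    (p.eval (C c)).natDegree = (swap p).natDegree := by
  rw [eval_C_eq_map_swap]
  exact natDegree_map_of_leadingCoeff_ne_zero _ hc

theorem exists_eq_C_of_natDegree_swap_eq_zero {F : R[X][X]} (h : (swap F).natDegree = 0)
    (i : ℕ) : ∃ c, F.coeff i = C c :=
  ⟨_, eq_C_of_natDegree_eq_zero (Nat.le_zero.mp (h ▸ natDegree_coeff_le_natDegree_swap F i))⟩

theorem natDegree_swap_multiset_prod_le (s : Multiset R[X][X]) {d : ℕ}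
    (hs : ∀ p ∈ s, (swap p).natDegree ≤ d) :
    (swap s.prod).natDegree ≤ Multiset.card s * d := by
  rw [map_multiset_prod]
  refine (natDegree_multiset_prod_le _).trans ?_
  rw [Multiset.map_map]
  simpa using Multiset.sum_le_card_nsmul (s.map fun p => (swap p).natDegree) d (by simpa using hs)

theorem coeff_swap_derivative_swap (p : R[X][X]) (i : ℕ) :
    (swap (derivative (swap p))).coeff i = derivative (p.coeff i) := by
  ext j
  rw [coeff_coeff_swap, coeff_derivative, coeff_derivative, ← Nat.cast_succ, coeff_mul_natCast,
    coeff_coeff_swap, Nat.cast_succ]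

theorem eval_C_swap_derivative_swap (p : R[X][X]) (c : R) :
    (swap (derivative (swap p))).eval (C c) = derivative (p.eval (C c)) := by
  rw [eval_C_eq_map_swap, eval_C_eq_map_swap, swap_swap_apply, derivative_map]

theorem natDegree_swap_derivative_swap_lt {p : R[X][X]} (hp : p.Monic) (h : 0 < p.natDegree) :
    (swap (derivative (swap p))).natDegree < p.natDegree := by
  refine Nat.lt_of_le_pred h (natDegree_le_iff_coeff_eq_zero.mpr fun i hi => ?_)
  rw [coeff_swap_derivative_swap]
  rcases (show p.natDegree ≤ i by rw [Nat.pred_eq_sub_one] at hi; omega).eq_or_lt with rfl | hlt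
  · rw [hp.coeff_natDegree, derivative_one]
  · rw [coeff_eq_zero_of_natDegree_lt hlt, derivative_zero]

theorem not_dvd_swap_derivative_swap [IsDomain R] [CharZero R] {q : R[X][X]} (hq : q.Monic)
    (hq0 : 0 < q.natDegree) (hδ : 0 < (swap q).natDegree) : ¬q ∣ swap (derivative (swap q)) := by
  have hne : swap (derivative (swap q)) ≠ 0 := by
    rw [Ne, map_eq_zero_iff _ swap.injective]
    exact fun h => hδ.ne' (derivative_eq_zero.mp h)
  exact fun h => (natDegree_le_of_dvd h hne).not_gt (natDegree_swap_derivative_swap_lt hq hq0)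

theorem card_filter_isRoot_leadingCoeff_swap_le [IsDomain R] [DecidableEq R] {q : R[X][X]}
    (hq : q ≠ 0) (Λ : Finset R) :
    (Λ.filter fun c => (swap q).leadingCoeff.IsRoot c).card ≤ q.natDegree := by
  refine (card_le_degree_of_subset_roots fun c hc => ?_).trans (natDegree_leadingCoeff_swap_le q)
  rw [mem_roots (leadingCoeff_ne_zero.mpr ((map_ne_zero_iff _ swap.injective).mpr hq))]
  exact (Finset.mem_filter.mp hc).2

theorem exists_mem_forall_natDegree_swap_le {s : Multiset R[X][X]}
    (hs : (swap s.prod).natDegree ≠ 0) :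
    ∃ q ∈ s, 0 < (swap q).natDegree ∧ ∀ p ∈ s, (swap p).natDegree ≤ (swap q).natDegree := by
  classical
  obtain ⟨q, hq, hmax⟩ := s.toFinset.exists_max_image (fun p => (swap p).natDegree)
    (Multiset.toFinset_nonempty.mpr (by rintro rfl; simp at hs))
  simp only [Multiset.mem_toFinset] at hq hmax
  refine ⟨q, hq, Nat.pos_of_ne_zero fun hδ => hs ?_, hmax⟩
  simpa [hδ] using natDegree_swap_multiset_prod_le s hmax

end Swap

section Resultant

theorem natDegree_det_le {R ι : Type*} [CommRing R] [Fintype ι] [DecidableEq ι]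
    (A : Matrix ι ι R[X]) {d : ℕ} (hA : ∀ i j, (A i j).natDegree ≤ d) :
    A.det.natDegree ≤ Fintype.card ι * d := by
  rw [Matrix.det_apply]
  refine natDegree_sum_le_of_forall_le _ _ fun σ _ => ?_
  refine (natDegree_smul_le _ _).trans ((natDegree_prod_le _ _).trans ?_)
  exact (Finset.sum_le_card_nsmul _ _ d fun i _ => hA (σ i) i).trans_eq
    (by rw [smul_eq_mul, Finset.card_univ])

theorem natDegree_resultant_le {R : Type*} [CommRing R] (f g : R[X][X]) {d : ℕ}
    (hf : ∀ i, (f.coeff i).natDegree ≤ d) (hg : ∀ i, (g.coeff i).natDegree ≤ d) :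
    (resultant f g).natDegree ≤ (f.natDegree + g.natDegree) * d := by
  have := natDegree_det_le (sylvester f g f.natDegree g.natDegree) (d := d) ?_
  · simpa [resultant] using this
  intro i j
  refine j.addCases (fun j => ?_) (fun j => ?_) <;>
    simp only [sylvester, Matrix.of_apply, Fin.addCases_left, Fin.addCases_right] <;>
    split_ifs <;> simp [hf, hg]

theorem resultant_ne_zero_of_not_dvd {R : Type*} [CommRing R] [IsDomain R] [IsIntegrallyClosed R]
    {q r : R[X]} (hq : q.Monic) (hirr : Irreducible q) (hqr : ¬q ∣ r) : resultant q r ≠ 0 := by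
  let φ := algebraMap R (FractionRing R)
  have hφ : Function.Injective φ := IsFractionRing.injective R _
  have hcop : IsCoprime (q.map φ) (r.map φ) :=
    (hq.irreducible_iff_irreducible_map_fraction_map.mp hirr).coprime_iff_not_dvd.mpr
      (mt (map_dvd_map φ hφ hq).mp hqr)
  have hres : resultant (q.map φ) (r.map φ) = φ (resultant q r) := by
    rw [← resultant_map_map, natDegree_map_eq_of_injective hφ, natDegree_map_eq_of_injective hφ]
  intro h
  rw [h, map_zero, resultant_eq_zero_iff] at hres
  exact hres.2 hcop

end Resultant

section Roots

theorem isRoot_of_rootMultiplicity_eq_one {R : Type*} [CommRing R] [IsDomain R] {f g v : R[X]}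
    {k n : ℕ} (hk : ¬n ∣ k) (hpow : f ^ k * g = v ^ n) {a : R} (ha : rootMultiplicity a f = 1) :
    g.IsRoot a := by
  classical
  by_contra hga
  have hf : f ≠ 0 := by rintro rfl; simp at ha
  have hg : g ≠ 0 := by rintro rfl; exact hga (by simp)
  have := congrArg (fun p => p.roots.count a) hpow
  simp only [roots_mul (mul_ne_zero (pow_ne_zero _ hf) hg), roots_pow, Multiset.count_add,
    Multiset.count_nsmul, count_roots, ha, rootMultiplicity_eq_zero hga] at this
  exact hk ⟨_, by simpa using this⟩

variable {K : Type*} [Field K] [IsAlgClosed K] [DecidableEq K]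

theorem natDegree_le_two_mul_natDegree_gcd [CharZero K] {f g : K[X]} (hf : f ≠ 0)
    (hg : ∀ a, rootMultiplicity a f = 1 → g.IsRoot a) :
    f.natDegree ≤ 2 * (gcd f (g * derivative f)).natDegree := by
  set h := gcd f (g * derivative f)
  have h0 : h ≠ 0 := fun h0 => hf ((gcd_eq_zero_iff _ _).mp h0).1
  have hmult : ∀ a j, (X - C a) ^ j ∣ f → (X - C a) ^ j ∣ g * derivative f →
      j ≤ rootMultiplicity a h := fun a j hf' hg' =>
    (le_rootMultiplicity_iff h0).mpr (dvd_gcd hf' hg')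
  have hroots : f.roots ≤ 2 • h.roots := by
    refine Multiset.le_iff_count.mpr fun a => ?_
    rw [Multiset.count_nsmul, count_roots, count_roots]
    obtain hm | hm | hm : rootMultiplicity a f = 0 ∨ rootMultiplicity a f = 1 ∨
        2 ≤ rootMultiplicity a f := by omega
    · omega
    · have hroot : f.IsRoot a := (rootMultiplicity_pos hf).mp (by omega)
      have := hmult a 1 (by simpa using dvd_iff_isRoot.mpr hroot)
        (by simpa using (dvd_iff_isRoot.mpr (hg a hm)).mul_right _)
      omega
    · have hroot : f.IsRoot a := (rootMultiplicity_pos hf).mp (by omega)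
      have := hmult a (rootMultiplicity a f - 1)
        ((pow_dvd_pow _ (Nat.sub_le _ _)).trans (pow_rootMultiplicity_dvd f a))
        (by
          rw [← derivative_rootMultiplicity_of_root hroot]
          exact (pow_rootMultiplicity_dvd _ a).mul_left g)
      omega
  calc f.natDegree = Multiset.card f.roots := IsAlgClosed.card_roots_eq_natDegree.symm
    _ ≤ Multiset.card (2 • h.roots) := Multiset.card_le_card hroots
    _ = 2 * h.natDegree := by simp [IsAlgClosed.card_roots_eq_natDegree]

theorem sum_natDegree_le_mul_natDegree_of_dvd {ι : Type*} (S : Finset ι) (g : ι → K[X])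
    {w : K[X]} (hw : w ≠ 0) (hdvd : ∀ i ∈ S, g i ∣ w) (k : ℕ)
    (hk : ∀ a, (S.filter fun i => (g i).IsRoot a).card ≤ k) :
    ∑ i ∈ S, (g i).natDegree ≤ k * w.natDegree := by
  have hroots : ∑ i ∈ S, (g i).roots ≤ k • w.roots := by
    refine Multiset.le_iff_count.mpr fun a => ?_
    rw [Multiset.count_sum', Multiset.count_nsmul,
      ← Finset.sum_filter_of_ne (p := fun i => (g i).IsRoot a)]
    · calc ∑ i ∈ S.filter _, (g i).roots.count a
          ≤ ∑ i ∈ S.filter (fun i => (g i).IsRoot a), w.roots.count a :=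
            Finset.sum_le_sum fun i hi => Multiset.count_le_of_le _
              (roots.le_of_dvd hw (hdvd i (Finset.mem_filter.mp hi).1))
        _ ≤ k * w.roots.count a := by
            rw [Finset.sum_const, smul_eq_mul]
            exact Nat.mul_le_mul_right _ (hk a)
    · intro i _ h
      rw [count_roots] at h
      exact (rootMultiplicity_pos'.mp (Nat.pos_of_ne_zero h)).2
  calc ∑ i ∈ S, (g i).natDegree = Multiset.card (∑ i ∈ S, (g i).roots) := by
        simp [Multiset.card_sum, IsAlgClosed.card_roots_eq_natDegree]
    _ ≤ Multiset.card (k • w.roots) := Multiset.card_le_card hroots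
    _ = k * w.natDegree := by simp [IsAlgClosed.card_roots_eq_natDegree]

end Roots

section Specialization

variable {K : Type*} [Field K] [IsAlgClosed K] [DecidableEq K]

theorem sum_natDegree_gcd_eval_le {q r : K[X][X]} (hq : q.Monic) (hq0 : 0 < q.natDegree)
    (hres : resultant q r ≠ 0) {d : ℕ} (hdq : ∀ i, (q.coeff i).natDegree ≤ d)
    (hdr : ∀ i, (r.coeff i).natDegree ≤ d) (Λ : Finset K) :
    ∑ c ∈ Λ, (gcd (q.eval (C c)) (r.eval (C c))).natDegree ≤
      q.natDegree * ((q.natDegree + r.natDegree) * d) := by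
  obtain ⟨A, B, -, -, hAB⟩ :=
    exists_mul_add_mul_eq_C_resultant q r le_rfl le_rfl (Or.inl hq0.ne')
  refine (sum_natDegree_le_mul_natDegree_of_dvd Λ _ hres (fun c _ => ?_) _ fun a => ?_).trans
    (Nat.mul_le_mul_left _ (natDegree_resultant_le q r hdq hdr))
  · have := congrArg (eval (C c)) hAB
    rw [eval_add, eval_mul, eval_mul, eval_C] at this
    rw [← this]
    exact dvd_add ((gcd_dvd_left _ _).mul_right _) ((gcd_dvd_right _ _).mul_right _)
  · have hqa : (q.map (evalRingHom a)).Monic := hq.map _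
    refine (card_le_degree_of_subset_roots fun c hc => ?_).trans
      (hq.natDegree_map (evalRingHom a)).le
    obtain ⟨-, hroot⟩ := Finset.mem_filter.mp hc
    rw [mem_roots hqa.ne_zero, IsRoot, map_evalRingHom_eval]
    exact (dvd_iff_isRoot.mpr hroot).trans (gcd_dvd_left _ _) |> dvd_iff_isRoot.mp

variable [CharZero K]

theorem natDegree_eval_le_two_mul_natDegree_gcd (q G : K[X][X]) {k n : ℕ} (hk : ¬n ∣ k) {c : K}
    (hc : q.eval (C c) ≠ 0) {v : K[X]} (hv : (q ^ k * G).eval (C c) = v ^ n) :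
    (q.eval (C c)).natDegree ≤
      2 * (gcd (q.eval (C c)) ((G * swap (derivative (swap q))).eval (C c))).natDegree := by
  rw [eval_mul, eval_pow] at hv
  rw [eval_mul, eval_C_swap_derivative_swap]
  exact natDegree_le_two_mul_natDegree_gcd hc fun a ha => isRoot_of_rootMultiplicity_eq_one hk hv ha

theorem card_mul_natDegree_swap_le {q G : K[X][X]} {k n : ℕ} (hq : q.Monic)
    (hq0 : 0 < q.natDegree) (hδ : 0 < (swap q).natDegree) (hk : ¬n ∣ k)
    (hres : resultant q (G * swap (derivative (swap q))) ≠ 0) {d : ℕ}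
    (hdq : ∀ i, (q.coeff i).natDegree ≤ d)
    (hdr : ∀ i, ((G * swap (derivative (swap q))).coeff i).natDegree ≤ d) (Λ : Finset K)
    (hΛ : ∀ c ∈ Λ, (swap q).leadingCoeff.eval c ≠ 0 ∧ ∃ v, (q ^ k * G).eval (C c) = v ^ n) :
    Λ.card * (swap q).natDegree ≤
      2 * (q.natDegree * ((q.natDegree + (G * swap (derivative (swap q))).natDegree) * d)) := by
  set r := G * swap (derivative (swap q))
  have hdeg : ∀ c ∈ Λ, (q.eval (C c)).natDegree = (swap q).natDegree := fun c hc =>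
    natDegree_eval_C_eq q (hΛ c hc).1
  calc Λ.card * (swap q).natDegree = ∑ c ∈ Λ, (q.eval (C c)).natDegree := by
        rw [Finset.sum_congr rfl hdeg, Finset.sum_const, smul_eq_mul]
    _ ≤ ∑ c ∈ Λ, 2 * (gcd (q.eval (C c)) (r.eval (C c))).natDegree := by
        refine Finset.sum_le_sum fun c hc => ?_
        obtain ⟨v, hv⟩ := (hΛ c hc).2
        refine natDegree_eval_le_two_mul_natDegree_gcd q G hk (fun h0 => ?_) hv
        have := hdeg c hc
        rw [h0, natDegree_zero] at this
        omega
    _ ≤ _ := by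
        rw [← Finset.mul_sum]
        exact Nat.mul_le_mul_left _ (sum_natDegree_gcd_eval_le hq hq0 hres hdq hdr Λ)

theorem card_lt_of_forall_eval_eq_pow {q G : K[X][X]} {k n : ℕ} (hq : q.Monic)
    (hirr : Irreducible q) (hqG : ¬q ∣ G) (hk : ¬n ∣ k) (hδ : 0 < (swap q).natDegree)
    (hG : (swap G).natDegree ≤ (q ^ k * G).natDegree * (swap q).natDegree) (Λ : Finset K)
    (hΛ : ∀ c ∈ Λ, ∃ v, (q ^ k * G).eval (C c) = v ^ n) :
    Λ.card < 6 * (q ^ k * G).natDegree ^ 2 * ((q ^ k * G).natDegree + 1) := by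
  have hq0 : 0 < q.natDegree := hq.natDegree_pos.mpr hirr.ne_one
  have hG0 : G ≠ 0 := by rintro rfl; exact hqG (dvd_zero _)
  have hk0 : k ≠ 0 := by rintro rfl; exact hk (dvd_zero _)
  have hN : q.natDegree + G.natDegree ≤ (q ^ k * G).natDegree := by
    rw [natDegree_mul (pow_ne_zero _ hq.ne_zero) hG0, hq.natDegree_pow]
    nlinarith [Nat.one_le_iff_ne_zero.mpr hk0]
  set N := (q ^ k * G).natDegree
  set δ := (swap q).natDegree
  set m := q.natDegree
  set r := G * swap (derivative (swap q))
  have hr : m + r.natDegree < 2 * N := by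
    have := natDegree_swap_derivative_swap_lt hq hq0
    have : r.natDegree ≤ G.natDegree + (swap (derivative (swap q))).natDegree :=
      natDegree_mul_le
    omega
  have hdq : ∀ i, (q.coeff i).natDegree ≤ (N + 1) * δ := fun i =>
    (natDegree_coeff_le_natDegree_swap q i).trans (Nat.le_mul_of_pos_left _ N.succ_pos)
  have hdr : ∀ i, (r.coeff i).natDegree ≤ (N + 1) * δ := by
    intro i
    refine (natDegree_coeff_le_natDegree_swap r i).trans ?_
    rw [map_mul, swap_swap_apply]
    have := natDegree_derivative_le (swap q)
    have := natDegree_mul_le (p := swap G) (q := derivative (swap q))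
    rw [add_one_mul]
    omega
  have hres : resultant q r ≠ 0 := resultant_ne_zero_of_not_dvd hq hirr fun h =>
    (hirr.prime.dvd_or_dvd h).elim hqG (not_dvd_swap_derivative_swap hq hq0 hδ)
  set good := Λ.filter fun c => ¬(swap q).leadingCoeff.IsRoot c
  have hgood := card_mul_natDegree_swap_le hq hq0 hδ hk hres hdq hdr good fun c hc =>
    ⟨(Finset.mem_filter.mp hc).2, hΛ c (Finset.mem_filter.mp hc).1⟩
  have hcard : good.card ≤ 2 * (m * ((m + r.natDegree) * (N + 1))) :=
    Nat.le_of_mul_le_mul_right (by nlinarith [hgood]) hδ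
  have hbad := card_filter_isRoot_leadingCoeff_swap_le hq.ne_zero Λ
  rw [← Finset.card_filter_add_card_filter_not (fun c => (swap q).leadingCoeff.IsRoot c)]
  have : m * (m + r.natDegree) ≤ N * (2 * N) := Nat.mul_le_mul (by omega) hr.le
  nlinarith

end Specialization

section Factorization

variable {K : Type*} [Field K]

theorem Monic.exists_monic_irreducible_multiset_prod_eq {F : K[X][X]} (hF : F.Monic) :
    ∃ s : Multiset K[X][X], (∀ p ∈ s, p.Monic) ∧ (∀ p ∈ s, Irreducible p) ∧ s.prod = F := by
  classical
  have hmon : ∀ p ∈ UniqueFactorizationMonoid.normalizedFactors F, p.Monic := fun p hp => by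
    obtain ⟨c, hc⟩ := UniqueFactorizationMonoid.dvd_of_mem_normalizedFactors hp
    have hu : IsUnit p.leadingCoeff :=
      IsUnit.of_mul_eq_one _ (by rw [← leadingCoeff_mul, ← hc, hF.leadingCoeff])
    rw [Monic, ← UniqueFactorizationMonoid.normalize_normalized_factor p hp,
      leadingCoeff_normalize, normalize_eq_one.mpr hu]
  exact ⟨_, hmon, fun p hp => UniqueFactorizationMonoid.irreducible_of_normalized_factor p hp,
    eq_of_monic_of_associated (by simpa using monic_multiset_prod_of_monic _ id hmon) hF
      (UniqueFactorizationMonoid.prod_normalizedFactors hF.ne_zero)⟩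

theorem exists_eq_pow_count_mul_of_mem [DecidableEq K] {s : Multiset K[X][X]}
    (hmon : ∀ p ∈ s, p.Monic) (hirr : ∀ p ∈ s, Irreducible p) {q : K[X][X]} (hq : q ∈ s)
    (hmax : ∀ p ∈ s, (swap p).natDegree ≤ (swap q).natDegree) :
    ∃ G, s.prod = q ^ s.count q * G ∧ ¬q ∣ G ∧
      (swap G).natDegree ≤ s.prod.natDegree * (swap q).natDegree := by
  refine ⟨(s.filter (· ≠ q)).prod, ?_, fun h => ?_, ?_⟩
  · rw [← Multiset.prod_replicate, ← Multiset.filter_eq',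
      ← Multiset.prod_filter_mul_prod_filter_not (· = q)]
  · obtain ⟨p, hp, hqp⟩ := (hirr q hq).prime.exists_mem_multiset_dvd h
    obtain ⟨hps, hpq⟩ := Multiset.mem_filter.mp hp
    exact hpq (eq_of_monic_of_associated (hmon p hps) (hmon q hq)
      ((hirr q hq).associated_of_dvd (hirr p hps) hqp).symm)
  · have hcard : Multiset.card s ≤ s.prod.natDegree := by
      rw [natDegree_multiset_prod_of_monic _ hmon]
      have hpos : ∀ d ∈ s.map natDegree, 1 ≤ d := by
        simpa [Nat.one_le_iff_ne_zero, ← Nat.pos_iff_ne_zero] using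
          fun p hp => (hmon p hp).natDegree_pos.mpr (hirr p hp).ne_one
      simpa using Multiset.card_nsmul_le_sum hpos
    refine (natDegree_swap_multiset_prod_le _ fun p hp =>
      hmax p (Multiset.mem_of_mem_filter hp)).trans (Nat.mul_le_mul_right _ ?_)
    exact (Multiset.card_le_card (Multiset.filter_le _ _)).trans hcard

theorem Monic.eq_X_add_C_pow_of_pow_dvd {R : Type*} [CommRing R] [IsDomain R] {F q : R[X]} {n : ℕ}
    (hF : F.Monic) (hdeg : F.natDegree = n) (hn : 0 < n) (hq : q.Monic)
    (hq0 : 0 < q.natDegree) (hdvd : q ^ n ∣ F) : F = (X + C (q.coeff 0)) ^ n := by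
  obtain ⟨G, rfl⟩ := hdvd
  have hG : G.Monic := (hq.pow n).of_mul_monic_left hF
  rw [(hq.pow n).natDegree_mul hG, hq.natDegree_pow] at hdeg
  have hq1 : q.natDegree = 1 := by nlinarith
  rw [eq_one_of_monic_natDegree_zero hG (by nlinarith), mul_one]
  conv_lhs => rw [hq.eq_X_add_C hq1]

end Factorization

end Polynomial

theorem Nat.three_le_choose_three_mul_sub_one {n : ℕ} (hn : 2 ≤ n) : 3 ≤ (3 * n - 1).choose n :=
  calc 3 ≤ (n + 1).choose n := by rw [Nat.choose_succ_self_right]; omega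
    _ ≤ (3 * n - 1).choose n := Nat.choose_le_choose n (by omega)

theorem buchi_problem_monic_polynomial_complex
    (n : ℕ) (hn : 2 ≤ n)
    (F : Polynomial (Polynomial ℂ))
    (hmonic : F.Monic) (hdeg : F.natDegree = n)
    (hpow : ∀ lam : ℕ, 1 ≤ lam → lam ≤ 2 * n ^ 2 * (n + 1) * Nat.choose (3 * n - 1) n →
      ∃ v : Polynomial ℂ, F.eval ((lam : Polynomial ℂ)) = v ^ n) :
    (∀ i, ∃ c : ℂ, F.coeff i = C c) ∨
    ∃ ν : Polynomial ℂ, F = (X + C ν) ^ n := by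
  obtain ⟨s, hmon, hirr, rfl⟩ := hmonic.exists_monic_irreducible_multiset_prod_eq
  by_cases hF : (Bivariate.swap s.prod).natDegree = 0
  · exact Or.inl (exists_eq_C_of_natDegree_swap_eq_zero hF)
  obtain ⟨q, hq, hδ, hmax⟩ := exists_mem_forall_natDegree_swap_le hF
  obtain ⟨G, hFG, hqG, hG⟩ := exists_eq_pow_count_mul_of_mem hmon hirr hq hmax
  by_cases hk : n ∣ s.count q
  · refine Or.inr ⟨_, hmonic.eq_X_add_C_pow_of_pow_dvd hdeg (by omega) (hmon q hq)
      ((hmon q hq).natDegree_pos.mpr (hirr q hq).ne_one) ?_⟩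
    exact (pow_dvd_pow q (Nat.le_of_dvd (Multiset.count_pos.mpr hq) hk)).trans ⟨G, hFG⟩
  rw [hFG] at hdeg hG hpow
  have := card_lt_of_forall_eval_eq_pow (hmon q hq) (hirr q hq) hqG hk hδ hG
    ((Finset.Icc 1 (2 * n ^ 2 * (n + 1) * (3 * n - 1).choose n)).image Nat.cast) fun c hc => by
      obtain ⟨l, hl, rfl⟩ := Finset.mem_image.mp hc
      rw [map_natCast]
      exact hpow l (Finset.mem_Icc.mp hl).1 (Finset.mem_Icc.mp hl).2
  rw [Finset.card_image_of_injective _ Nat.cast_injective, Nat.card_Icc, Nat.add_sub_cancel,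
    hdeg] at this
  nlinarith [Nat.mul_le_mul_left (2 * n ^ 2 * (n + 1)) (Nat.three_le_choose_three_mul_sub_one hn)]
end

section
/- Let K be an algebraically closed field of characteristic zero and let c ∈ K(x) be a rational function not lying in K. Then there are at most 4 values λ ∈ K such that the rational function c + λ has only multiple zeros, i.e. such that every zero of c + λ on the projective line (including a possible zero at infinity) has multiplicity at least 2. -/
/-!
Write `c = p / q` in lowest terms, so that `(c + λ).num = p + λ q`. The Wronskian
`W = q p' - q' p` of `q` and `p + λ q` does not depend on `λ`, is nonzero because `c` is not
constant, and has degree `< deg p + deg q ≤ 2 N`, where `N = max (deg p) (deg q)`. Each `p + λ q`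
divided by its radical divides `W`, and for distinct `λ` these quotients are coprime, so their
degrees add up to at most `deg W`. A polynomial with only multiple roots has at most half as many
distinct roots as its degree, so its quotient by its radical has at least half its degree; and all
but at most one `p + λ q` have degree `N`. Hence `(|B| - 1) N ≤ 2 deg W < 4 N`.
-/

open Polynomial

/-- A rational function `f` has only multiple zeros if every root of its numerator
has multiplicity at least `2`, and moreover if `f` has a zero at infinity
(i.e. `deg num < deg denom`) then that zero has multiplicity at least `2`. -/
def HasOnlyMultipleZeros {K : Type*} [Field K] (f : RatFunc K) : Prop :=
  (∀ a : K, f.num.eval a = 0 → 2 ≤ f.num.rootMultiplicity a) ∧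
  (f.num.natDegree < f.denom.natDegree → f.num.natDegree + 2 ≤ f.denom.natDegree)

open UniqueFactorizationMonoid EuclideanDomain

namespace Polynomial

section Domain

variable {R : Type*} [CommRing R]

theorem wronskian_add_C_mul_right (p q : R[X]) (a : R) :
    wronskian q (p + C a * q) = wronskian q p := by
  simp only [wronskian, derivative_add, derivative_C_mul]
  ring

theorem natDegree_add_C_mul_le_max (p q : R[X]) (a : R) :
    (p + C a * q).natDegree ≤ max p.natDegree q.natDegree :=
  (natDegree_add_le _ _).trans (max_le_max le_rfl (natDegree_C_mul_le _ _))

variable [IsDomain R]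

theorem two_mul_card_roots_toFinset_le [DecidableEq R] {p : R[X]}
    (hp : ∀ a, p.IsRoot a → 2 ≤ p.rootMultiplicity a) :
    2 * p.roots.toFinset.card ≤ p.roots.card :=
  calc 2 * p.roots.toFinset.card = ∑ _a ∈ p.roots.toFinset, 2 := by
        rw [Finset.sum_const, smul_eq_mul, mul_comm]
    _ ≤ ∑ a ∈ p.roots.toFinset, p.roots.count a :=
        Finset.sum_le_sum fun a ha => by
          rw [count_roots]
          exact hp a (isRoot_of_mem_roots (Multiset.mem_toFinset.mp ha))
    _ = p.roots.card := Multiset.toFinset_sum_count_eq _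

theorem natDegree_add_C_mul_eq_max_or (p q : R[X]) {a b : R} (hab : a ≠ b) :
    (p + C a * q).natDegree = max p.natDegree q.natDegree ∨
      (p + C b * q).natDegree = max p.natDegree q.natDegree := by
  by_contra! h
  have ha := lt_of_le_of_ne (natDegree_add_C_mul_le_max p q a) h.1
  have hb := lt_of_le_of_ne (natDegree_add_C_mul_le_max p q b) h.2
  have hq : q.natDegree < max p.natDegree q.natDegree := by
    have hdiff : (p + C a * q) - (p + C b * q) = C (a - b) * q := by rw [C_sub]; ring
    have := natDegree_sub_le (p + C a * q) (p + C b * q)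
    rw [hdiff, natDegree_C_mul (sub_ne_zero.mpr hab)] at this
    omega
  have hp : q.natDegree < p.natDegree := by omega
  rw [natDegree_add_eq_left_of_natDegree_lt ((natDegree_C_mul_le a q).trans_lt hp)] at ha
  omega

theorem card_mul_max_natDegree_le [DecidableEq R] (p q : R[X]) (B : Finset R) :
    B.card * max p.natDegree q.natDegree ≤
      ∑ a ∈ B, (p + C a * q).natDegree + max p.natDegree q.natDegree := by
  set N := max p.natDegree q.natDegree
  by_cases h : ∀ a ∈ B, (p + C a * q).natDegree = N
  · rw [Finset.sum_congr rfl h, Finset.sum_const, smul_eq_mul]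
    omega
  simp only [not_forall] at h
  obtain ⟨a₀, ha₀, hne⟩ := h
  have hrest : ∀ b ∈ B.erase a₀, (p + C b * q).natDegree = N := fun b hb =>
    (natDegree_add_C_mul_eq_max_or p q (Finset.ne_of_mem_erase hb).symm).resolve_left hne
  calc B.card * N = ∑ _b ∈ B.erase a₀, N + N := by
        rw [Finset.sum_erase_add _ _ ha₀, Finset.sum_const, smul_eq_mul]
    _ = ∑ b ∈ B.erase a₀, (p + C b * q).natDegree + N := by rw [Finset.sum_congr rfl hrest]
    _ ≤ ∑ a ∈ B, (p + C a * q).natDegree + N :=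
        Nat.add_le_add_right (Finset.sum_le_sum_of_subset (Finset.erase_subset a₀ B)) N

end Domain

variable {K : Type*} [Field K]

theorem natDegree_radical_le_card_roots_toFinset [IsAlgClosed K] [DecidableEq K] {p : K[X]}
    (hp : p ≠ 0) : (radical p).natDegree ≤ p.roots.toFinset.card := by
  have hsep : (radical p).Separable := PerfectField.separable_iff_squarefree.mpr squarefree_radical
  rw [← IsAlgClosed.card_roots_eq_natDegree, ← Multiset.toFinset_card_of_nodup (nodup_roots hsep)]
  exact Finset.card_le_card <| Multiset.toFinset_subset.mpr <|
    Multiset.subset_of_le (roots.le_of_dvd hp radical_dvd_self)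

theorem natDegree_le_two_mul_natDegree_divRadical [IsAlgClosed K] [DecidableEq K] {p : K[X]}
    (hp : ∀ a, p.IsRoot a → 2 ≤ p.rootMultiplicity a) :
    p.natDegree ≤ 2 * (divRadical p).natDegree := by
  rcases eq_or_ne p 0 with rfl | hp0
  · simp
  have hsplit : p.natDegree = (radical p).natDegree + (divRadical p).natDegree := by
    rw [← natDegree_mul radical_ne_zero (divRadical_ne_zero hp0), radical_mul_divRadical]
  have := natDegree_radical_le_card_roots_toFinset hp0
  have := two_mul_card_roots_toFinset_le hp
  rw [IsAlgClosed.card_roots_eq_natDegree] at this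
  omega

theorem isCoprime_add_C_mul_of_ne {p q : K[X]} (hpq : IsCoprime p q) {a b : K} (hab : a ≠ b) :
    IsCoprime (p + C a * q) (p + C b * q) := by
  have hunit : IsUnit (C (b - a)) := isUnit_C.mpr (sub_ne_zero.mpr hab.symm).isUnit
  have h := ((isCoprime_mul_unit_left_right hunit _ _).mpr
    (hpq.add_mul_right_left (C a))).add_mul_right_right 1
  rwa [show C (b - a) * q + 1 * (p + C a * q) = p + C b * q by rw [C_sub]; ring] at h

theorem sum_natDegree_divRadical_add_C_mul_lt [DecidableEq K] {p q : K[X]} (hpq : IsCoprime p q)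
    (hW : wronskian q p ≠ 0) (B : Finset K) :
    ∑ a ∈ B, (divRadical (p + C a * q)).natDegree < p.natDegree + q.natDegree := by
  have hdvd : ∏ a ∈ B, divRadical (p + C a * q) ∣ wronskian q p := by
    refine Finset.prod_dvd_of_coprime (fun a _ b _ hab => ?_) fun a _ => ?_
    · exact (isCoprime_add_C_mul_of_ne hpq hab).divRadical
    · rw [← wronskian_add_C_mul_right p q a]
      exact divRadical_dvd_wronskian_right _ _
  have hne : ∀ a ∈ B, divRadical (p + C a * q) ≠ 0 :=
    Finset.prod_ne_zero_iff.mp (ne_zero_of_dvd_ne_zero hW hdvd)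
  calc ∑ a ∈ B, (divRadical (p + C a * q)).natDegree
      = (∏ a ∈ B, divRadical (p + C a * q)).natDegree := (natDegree_prod _ _ hne).symm
    _ ≤ (wronskian q p).natDegree := natDegree_le_of_dvd hdvd hW
    _ < p.natDegree + q.natDegree := add_comm q.natDegree _ ▸ natDegree_wronskian_lt_add hW

end Polynomial

namespace RatFunc

variable {K : Type*} [Field K]

theorem num_mul_denom_add_algebraMap (x : RatFunc K) (r : K[X]) :
    (x + algebraMap K[X] (RatFunc K) r).num * x.denom =
      (x.num + r * x.denom) * (x + algebraMap K[X] (RatFunc K) r).denom := by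
  simpa [mul_comm] using num_denom_add x (algebraMap K[X] (RatFunc K) r)

theorem denom_add_algebraMap (x : RatFunc K) (r : K[X]) :
    (x + algebraMap K[X] (RatFunc K) r).denom = x.denom := by
  have h := num_mul_denom_add_algebraMap x r
  refine eq_of_monic_of_associated (monic_denom _) (monic_denom x) (associated_of_dvd_dvd ?_ ?_)
  · exact (isCoprime_num_denom _).symm.dvd_of_dvd_mul_left (h ▸ dvd_mul_left _ _)
  · exact (x.isCoprime_num_denom.add_mul_right_left r).symm.dvd_of_dvd_mul_left
      (h ▸ dvd_mul_left _ _)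

theorem num_add_algebraMap (x : RatFunc K) (r : K[X]) :
    (x + algebraMap K[X] (RatFunc K) r).num = x.num + r * x.denom := by
  have h := num_mul_denom_add_algebraMap x r
  rw [denom_add_algebraMap] at h
  exact mul_right_cancel₀ x.denom_ne_zero h

theorem wronskian_denom_num_ne_zero [CharZero K] {x : RatFunc K} (hx : ∀ k, x ≠ C k) :
    wronskian x.denom x.num ≠ 0 := by
  rw [Ne, x.isCoprime_num_denom.symm.wronskian_eq_zero_iff]
  rintro ⟨hd, hn⟩
  obtain ⟨k, hk⟩ := (eq_C_iff x).mpr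
    ⟨derivative_eq_zero.mp hn, derivative_eq_zero.mp hd⟩
  exact hx k hk

end RatFunc

theorem at_most_four_multiple_zero_translates
    {K : Type*} [Field K] [IsAlgClosed K] [CharZero K]
    (c : RatFunc K) (hc : ∀ k : K, c ≠ RatFunc.C k)
    (B : Finset K)
    (hB : ∀ lam ∈ B, HasOnlyMultipleZeros (c + RatFunc.C lam)) :
    B.card ≤ 4 := by
  classical
  have hnum : ∀ a, (c + RatFunc.C a).num = c.num + C a * c.denom := fun a => by
    rw [← RatFunc.algebraMap_C, RatFunc.num_add_algebraMap]
  have hdeg : ∀ a ∈ B, (c.num + C a * c.denom).natDegree ≤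
      2 * (divRadical (c.num + C a * c.denom)).natDegree := fun a ha =>
    hnum a ▸ natDegree_le_two_mul_natDegree_divRadical (hB a ha).1
  have hW := sum_natDegree_divRadical_add_C_mul_lt c.isCoprime_num_denom
    (RatFunc.wronskian_denom_num_ne_zero hc) B
  have hcount := card_mul_max_natDegree_le c.num c.denom B
  have hsum := Finset.sum_le_sum hdeg
  rw [← Finset.mul_sum] at hsum
  have hp := le_max_left c.num.natDegree c.denom.natDegree
  have hq := le_max_right c.num.natDegree c.denom.natDegree
  have hlt : B.card * max c.num.natDegree c.denom.natDegree <
      5 * max c.num.natDegree c.denom.natDegree := by linarith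
  exact Nat.le_of_lt_succ (Nat.lt_of_mul_lt_mul_right hlt)
end

section
/- Let K be an algebraically closed field of characteristic zero, let n ≥ 2, let c ∈ K(x) be a rational function not lying in K, and let G ∈ K[s, t] be a homogeneous polynomial of degree n − 1 with constant (i.e. in K) coefficients, with G monic in s. Define F(s, t) = G(s, t)·(s + c·t) ∈ K(x)[s, t]. Then there are at most 4 + (n − 1) values λ ∈ K such that F(λ, 1) ∈ K(x) is nonzero and has only multiple zeros, i.e. every zero of F(λ, 1) on the projective line (including a possible zero at infinity) has multiplicity at least 2. -/
open Polynomial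

/-!
Write `c = p / q` in lowest terms. When `G(λ, 1) ≠ 0`, the finite zeros of `F(λ, 1)` are those
of `N_λ = λ q + p`. These polynomials are pairwise coprime and share the Wronskian
`W(N_λ, q) = W(p, q)`, which is nonzero because `c` is not constant; `N_λ / rad N_λ` divides it.
If `N_λ` has only multiple roots, then `deg (N_λ / rad N_λ) ≥ deg N_λ / 2`, and
`deg N_λ = max (deg p, deg q)` for all but at most one `λ`, whereas
`deg W(p, q) < deg p + deg q ≤ 2 max (deg p, deg q)`. So at most three generic values of `λ`
qualify, plus possibly the exceptional one.
-/

open UniqueFactorizationMonoid EuclideanDomain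

namespace UniqueFactorizationMonoid

variable {M : Type*} [CommMonoidWithZero M] [NormalizationMonoid M] [UniqueFactorizationMonoid M]

theorem radical_sq_dvd_of_forall_prime {a : M} (h : ∀ p, Prime p → p ∣ a → p ^ 2 ∣ a) :
    radical a ^ 2 ∣ a := by
  rw [radical, ← Finset.prod_pow]
  refine Finset.prod_dvd_of_isRelPrime ?_ fun p hp => ?_
  · exact pairwise_primeFactors_isRelPrime.mono' fun _ _ h => h.pow
  · rw [mem_primeFactors] at hp
    exact h p (prime_of_normalized_factor p hp) (dvd_of_mem_normalizedFactors hp)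

end UniqueFactorizationMonoid

namespace Polynomial

variable {K : Type*} [Field K]

def HasOnlyMultipleRoots (f : K[X]) : Prop :=
  ∀ a, f.IsRoot a → 2 ≤ f.rootMultiplicity a

theorem _root_.Associated.rootMultiplicity_eq {f g : K[X]} (h : Associated f g) (a : K) :
    f.rootMultiplicity a = g.rootMultiplicity a := by
  classical
  simp only [rootMultiplicity_eq_multiplicity, h.eq_zero_iff,
    multiplicity_eq_of_associated_right h]

theorem _root_.Associated.hasOnlyMultipleRoots_iff {f g : K[X]} (h : Associated f g) :
    f.HasOnlyMultipleRoots ↔ g.HasOnlyMultipleRoots := by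
  simp only [HasOnlyMultipleRoots, ← dvd_iff_isRoot, h.dvd_iff_dvd_right, h.rootMultiplicity_eq]

theorem HasOnlyMultipleRoots.radical_sq_dvd [IsAlgClosed K] [DecidableEq K] {f : K[X]}
    (hf : f.HasOnlyMultipleRoots) : radical f ^ 2 ∣ f := by
  refine radical_sq_dvd_of_forall_prime fun p hp hpf => ?_
  rcases eq_or_ne f 0 with rfl | hf0
  · exact dvd_zero _
  obtain ⟨a, ha⟩ := IsAlgClosed.exists_root p (degree_pos_of_irreducible hp.irreducible).ne'
  have hap : Associated (X - C a) p :=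
    (irreducible_X_sub_C a).associated_of_dvd hp.irreducible (dvd_iff_isRoot.mpr ha)
  rw [← (hap.pow_pow (n := 2)).dvd_iff_dvd_left, ← le_rootMultiplicity_iff hf0]
  exact hf a (dvd_iff_isRoot.mp (hap.dvd.trans hpf))

theorem natDegree_le_two_mul_natDegree_divRadical_s8 [DecidableEq K] {f : K[X]} (hf0 : f ≠ 0)
    (hf : radical f ^ 2 ∣ f) : f.natDegree ≤ 2 * (divRadical f).natDegree := by
  have hdiv0 : divRadical f ≠ 0 := divRadical_ne_zero hf0
  have hrad : radical f ∣ divRadical f := by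
    rwa [← mul_dvd_mul_iff_left radical_ne_zero, radical_mul_divRadical, ← sq]
  have hdeg := natDegree_le_of_dvd hrad hdiv0
  conv_lhs => rw [← radical_mul_divRadical (a := f), natDegree_mul radical_ne_zero hdiv0]
  omega

section Pencil

variable (p q : K[X])

theorem wronskian_C_mul_add_left (t : K) : wronskian (C t * q + p) q = wronskian p q := by
  rw [wronskian_add_left, ← smul_eq_C_mul, ← wronskianBilin_apply, LinearMap.map_smul₂,
    wronskianBilin_apply, wronskian_self_eq_zero, smul_zero, zero_add]

variable {p q}

theorem _root_.IsCoprime.C_mul_add_of_ne (hpq : IsCoprime p q) {t u : K} (htu : t ≠ u) :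
    IsCoprime (C t * q + p) (C u * q + p) := by
  obtain ⟨a, b, hab⟩ := hpq
  have hd : C (t - u)⁻¹ * (C t - C u) = 1 := by
    rw [← C_sub, ← C_mul, inv_mul_cancel₀ (sub_ne_zero.mpr htu), C_1]
  refine ⟨C (t - u)⁻¹ * (b - C u * a), C (t - u)⁻¹ * (C t * a - b), ?_⟩
  linear_combination (a * p + b * q) * hd + hab

theorem exists_forall_ne_max_natDegree_le (hq : q ≠ 0) :
    ∃ t₀ : K, ∀ t ≠ t₀, max p.natDegree q.natDegree ≤ (C t * q + p).natDegree := by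
  set M := max p.natDegree q.natDegree with hM
  refine ⟨-p.coeff M / q.coeff M, fun t ht => le_natDegree_of_ne_zero ?_⟩
  rw [coeff_add, coeff_C_mul]
  rcases lt_or_ge q.natDegree p.natDegree with hpq | hpq
  · rw [hM, max_eq_left hpq.le, coeff_eq_zero_of_natDegree_lt hpq, mul_zero, zero_add]
    exact leadingCoeff_ne_zero.mpr (ne_zero_of_natDegree_gt hpq)
  · have hqM : q.coeff M ≠ 0 := by
      rw [hM, max_eq_right hpq]; exact leadingCoeff_ne_zero.mpr hq
    contrapose! ht
    field_simp
    linear_combination ht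

theorem sum_natDegree_divRadical_C_mul_add_lt [DecidableEq K] (hpq : IsCoprime p q)
    (hW : wronskian p q ≠ 0) (S : Finset K) :
    ∑ t ∈ S, (divRadical (C t * q + p)).natDegree < p.natDegree + q.natDegree := by
  have hdvd : (∏ t ∈ S, divRadical (C t * q + p)) ∣ wronskian p q := by
    refine Finset.prod_dvd_of_coprime (fun t _ u _ htu => (hpq.C_mul_add_of_ne htu).divRadical)
      fun t _ => ?_
    rw [← wronskian_C_mul_add_left p q t]
    exact divRadical_dvd_wronskian_left _ _
  have hprod : ∏ t ∈ S, divRadical (C t * q + p) ≠ 0 := ne_zero_of_dvd_ne_zero hW hdvd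
  calc ∑ t ∈ S, (divRadical (C t * q + p)).natDegree
      = (∏ t ∈ S, divRadical (C t * q + p)).natDegree :=
        (natDegree_prod _ _ fun t ht => Finset.prod_ne_zero_iff.mp hprod t ht).symm
    _ ≤ (wronskian p q).natDegree := natDegree_le_of_dvd hdvd hW
    _ < p.natDegree + q.natDegree := natDegree_wronskian_lt_add hW

theorem card_le_three_of_hasOnlyMultipleRoots [IsAlgClosed K] (hpq : IsCoprime p q)
    (hW : wronskian p q ≠ 0) (S : Finset K)
    (hS : ∀ t ∈ S, (C t * q + p).HasOnlyMultipleRoots ∧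
      max p.natDegree q.natDegree ≤ (C t * q + p).natDegree) :
    S.card ≤ 3 := by
  classical
  set M := max p.natDegree q.natDegree
  have hdeg : ∀ t ∈ S, M ≤ 2 * (divRadical (C t * q + p)).natDegree := by
    intro t ht
    have h0 : C t * q + p ≠ 0 := by
      intro h
      apply hW
      rw [← wronskian_C_mul_add_left p q t, h, wronskian_zero_left]
    exact (hS t ht).2.trans
      (natDegree_le_two_mul_natDegree_divRadical_s8 h0 (hS t ht).1.radical_sq_dvd)
  have hsum := sum_natDegree_divRadical_C_mul_add_lt hpq hW S
  have hcard : S.card * M ≤ 2 * ∑ t ∈ S, (divRadical (C t * q + p)).natDegree := by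
    rw [Finset.mul_sum, ← smul_eq_mul]
    exact Finset.card_nsmul_le_sum S _ M hdeg
  have hlt : S.card * M < 4 * M := by
    have := add_le_add (le_max_left p.natDegree q.natDegree) (le_max_right p.natDegree q.natDegree)
    omega
  exact Nat.le_of_lt_succ (Nat.lt_of_mul_lt_mul_right hlt)

theorem card_le_four_of_hasOnlyMultipleRoots [IsAlgClosed K] (hpq : IsCoprime p q)
    (hq : q ≠ 0) (hW : wronskian p q ≠ 0) (S : Finset K)
    (hS : ∀ t ∈ S, (C t * q + p).HasOnlyMultipleRoots) :
    S.card ≤ 4 := by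
  classical
  obtain ⟨t₀, ht₀⟩ := exists_forall_ne_max_natDegree_le (p := p) hq
  have hgen : (S.erase t₀).card ≤ 3 :=
    card_le_three_of_hasOnlyMultipleRoots hpq hW _ fun t ht =>
      ⟨hS t (Finset.mem_of_mem_erase ht), ht₀ t (Finset.ne_of_mem_erase ht)⟩
  have := Finset.pred_card_le_card_erase (s := S) (a := t₀)
  omega

end Pencil

end Polynomial

namespace RatFunc

variable {K : Type*} [Field K]

theorem associated_num_div_of_isCoprime {p q : K[X]} (hq : q ≠ 0) (hpq : IsCoprime p q) :
    Associated (algebraMap K[X] (RatFunc K) p / algebraMap K[X] (RatFunc K) q).num p := by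
  set f := algebraMap K[X] (RatFunc K) p / algebraMap K[X] (RatFunc K) q
  have hnum : f.num * q = p * f.denom := (num_mul_eq_mul_denom_iff hq).mpr rfl
  exact associated_of_dvd_dvd (num_div_dvd p hq)
    (hpq.dvd_of_dvd_mul_right ⟨f.denom, by rw [← hnum, mul_comm]⟩)

theorem C_mul_C_add_eq_div (k t : K) (c : RatFunc K) :
    C k * (C t + c) =
      algebraMap K[X] (RatFunc K) (Polynomial.C k * (Polynomial.C t * c.denom + c.num)) /
        algebraMap K[X] (RatFunc K) c.denom := by
  have : algebraMap K[X] (RatFunc K) c.denom ≠ 0 := algebraMap_ne_zero c.denom_ne_zero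
  conv_lhs => rw [← c.num_div_denom]
  rw [← algebraMap_C, ← algebraMap_C]
  field_simp
  simp only [map_mul, map_add]

theorem associated_num_C_mul_C_add {k : K} (hk : k ≠ 0) (t : K) (c : RatFunc K) :
    Associated (C k * (C t + c)).num (Polynomial.C t * c.denom + c.num) := by
  have hunit : IsUnit (Polynomial.C k) := Polynomial.isUnit_C.mpr hk.isUnit
  have hcop : IsCoprime (Polynomial.C k * (Polynomial.C t * c.denom + c.num)) c.denom := by
    rw [isCoprime_mul_unit_left_left hunit, add_comm]
    exact c.isCoprime_num_denom.add_mul_right_left _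
  rw [C_mul_C_add_eq_div]
  exact (associated_num_div_of_isCoprime c.denom_ne_zero hcop).trans
    (associated_unit_mul_left _ _ hunit)

theorem eq_C_of_derivative_num_eq_zero [CharZero K] {c : RatFunc K}
    (hp : derivative c.num = 0) (hq : derivative c.denom = 0) :
    c = C (c.num.coeff 0) := by
  have hden : c.denom = 1 := by
    have h := c.monic_denom
    rw [eq_C_of_derivative_eq_zero hq] at h ⊢
    rw [Monic, leadingCoeff_C] at h
    rw [h, map_one]
  conv_lhs => rw [← c.num_div_denom, hden, map_one, _root_.div_one, eq_C_of_derivative_eq_zero hp]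
  rw [algebraMap_C]

end RatFunc

/-- The homogeneous form `G(s,t) = ∑_{i<n} g_i s^i t^{n-1-i}` of degree `n-1` with
constant coefficients `g_i ∈ K`, monic in `s` (i.e. `g_{n-1} = 1`), times the linear
form `s + c·t`, specialized at `(lam, 1)`, can be nonzero with only multiple zeros for at
most `4 + (n-1)` values `lam ∈ K`. -/
theorem constant_form_times_linear_is_rarely_powerful
    {K : Type*} [Field K] [IsAlgClosed K] [CharZero K]
    (n : ℕ)
    (c : RatFunc K) (hc : ∀ k : K, c ≠ RatFunc.C k)
    (g : Fin n → K)
    (B : Finset K)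
    (hB : ∀ lam ∈ B,
      RatFunc.C (∑ i : Fin n, g i * lam ^ (i : ℕ)) * (RatFunc.C lam + c) ≠ 0 ∧
      HasOnlyMultipleZeros (RatFunc.C (∑ i : Fin n, g i * lam ^ (i : ℕ)) * (RatFunc.C lam + c))) :
    B.card ≤ 4 + (n - 1) := by
  have hW : wronskian c.num c.denom ≠ 0 := fun h =>
    have ⟨hp, hq⟩ := c.isCoprime_num_denom.wronskian_eq_zero_iff.mp h
    hc _ (RatFunc.eq_C_of_derivative_num_eq_zero hp hq)
  have hB' : ∀ t ∈ B, (C t * c.denom + c.num).HasOnlyMultipleRoots := by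
    intro t ht
    obtain ⟨hne, hzeros, -⟩ := hB t ht
    have hk : ∑ i : Fin n, g i * t ^ (i : ℕ) ≠ 0 := fun h =>
      hne (by rw [h, map_zero, zero_mul])
    exact (RatFunc.associated_num_C_mul_C_add hk t c).hasOnlyMultipleRoots_iff.mp hzeros
  have := card_le_four_of_hasOnlyMultipleRoots c.isCoprime_num_denom c.denom_ne_zero hW B hB'
  omega
end

section
/- Let K be a field of characteristic p with p > 2, let e ≥ 1 be an integer, and set q = p^e. Then for every λ ∈ K satisfying λ^q = λ, the polynomial (λ + (x^q + x)/2)² − ((x^q − x)/2)² ∈ K[x] is a square in K[x]; indeed it equals ((x + λ)^{(q+1)/2})². -/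
open Polynomial

theorem buchi_positive_characteristic_square
    {K : Type*} [Field K] (p : ℕ) [CharP K p] (hp : 2 < p)
    (e : ℕ) (he : 1 ≤ e)
    (lam : K) (hlam : lam ^ (p ^ e) = lam) :
    IsSquare ((C lam + C (2 : K)⁻¹ * (X ^ (p ^ e) + X)) ^ 2
        - (C (2 : K)⁻¹ * (X ^ (p ^ e) - X)) ^ 2 : Polynomial K) ∧
    ((C lam + C (2 : K)⁻¹ * (X ^ (p ^ e) + X)) ^ 2
        - (C (2 : K)⁻¹ * (X ^ (p ^ e) - X)) ^ 2 : Polynomial K)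
      = ((X + C lam) ^ ((p ^ e + 1) / 2)) ^ 2 := by
  have hprime : p.Prime := (CharP.char_is_prime_or_zero K p).resolve_right (by omega)
  haveI : Fact p.Prime := ⟨hprime⟩
  have h2 : (2 : K) ≠ 0 := by
    intro h
    have := (CharP.cast_eq_zero_iff K p 2).mp (by exact_mod_cast h)
    have := Nat.le_of_dvd (by norm_num) this
    omega
  have hc : (2 : Polynomial K) * C (2 : K)⁻¹ = 1 := by
    rw [show (2 : Polynomial K) = C 2 from (map_ofNat C 2).symm, ← C_mul,
      mul_inv_cancel₀ h2, C_1]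
  have hfac : ((C lam + C (2 : K)⁻¹ * (X ^ (p ^ e) + X)) ^ 2
        - (C (2 : K)⁻¹ * (X ^ (p ^ e) - X)) ^ 2 : Polynomial K)
      = (C lam + X ^ (p ^ e)) * (C lam + X) := by
    linear_combination (C lam * (X ^ (p ^ e) + X)
      + X ^ (p ^ e) * X * (2 * C (2 : K)⁻¹ + 1)) * hc
  haveI : CharP (Polynomial K) p := Polynomial.instCharP p
  have hfrob : (X + C lam : Polynomial K) ^ (p ^ e) = X ^ (p ^ e) + C lam := by
    rw [add_pow_char_pow, ← C_pow, hlam]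
  have hodd : Odd (p ^ e) := (hprime.odd_of_ne_two (by omega)).pow
  have hhalf : (p ^ e + 1) / 2 * 2 = p ^ e + 1 := by
    obtain ⟨k, hk⟩ := hodd; omega
  have hmain : ((C lam + C (2 : K)⁻¹ * (X ^ (p ^ e) + X)) ^ 2
        - (C (2 : K)⁻¹ * (X ^ (p ^ e) - X)) ^ 2 : Polynomial K)
      = ((X + C lam) ^ ((p ^ e + 1) / 2)) ^ 2 := by
    rw [hfac, ← pow_mul, hhalf, pow_succ, hfrob]
    ring
  exact ⟨⟨(X + C lam) ^ ((p ^ e + 1) / 2), by rw [hmain, pow_two]⟩, hmain⟩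
end

section
/- Let K be a field of characteristic p with p > 2, let e ≥ 1 be an integer, and set q = p^e. Consider F(t) = (t + (x^q + x)/2)² − ((x^q − x)/2)² = t² + (x^q + x)·t + x^{q+1} ∈ (K[x])[t]. Then the coefficient x^q + x of F is a non-constant polynomial, and there is no ν ∈ K(x) such that F(t) = (t + ν)² in K(x)[t]. -/
open Polynomial

theorem buchi_positive_characteristic_counterexample
    {K : Type*} [Field K] (p : ℕ) [CharP K p] (hp : 2 < p)
    (e : ℕ) (he : 1 ≤ e) :
    -- F(t) = (t + (x^q + x)/2)² − ((x^q − x)/2)² equals t² + (x^q + x)·t + x^{q+1}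
    ((X + C (C (2 : K)⁻¹ * ((X : Polynomial K) ^ (p ^ e) + X))) ^ 2
        - C (C (2 : K)⁻¹ * ((X : Polynomial K) ^ (p ^ e) - X)) ^ 2
        : Polynomial (Polynomial K))
      = X ^ 2 + C ((X : Polynomial K) ^ (p ^ e) + X) * X
          + C ((X : Polynomial K) ^ (p ^ e + 1)) ∧
    -- the coefficient x^q + x is non-constant
    (¬ ∃ k : K, ((X : Polynomial K) ^ (p ^ e) + X) = C k) ∧
    -- F is not the square of a linear polynomial over K(x)
    ¬ ∃ ν : RatFunc K,
      (X ^ 2 + C (algebraMap (Polynomial K) (RatFunc K) ((X : Polynomial K) ^ (p ^ e) + X)) * X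
          + C (algebraMap (Polynomial K) (RatFunc K) ((X : Polynomial K) ^ (p ^ e + 1)))
          : Polynomial (RatFunc K))
        = (X + C ν) ^ 2 := by
  have h2 : (2 : K) ≠ 0 := by
    intro h
    have h' : p ∣ 2 := (CharP.cast_eq_zero_iff K p 2).mp (by exact_mod_cast h)
    have := Nat.le_of_dvd (by norm_num) h'
    omega
  have hq : 1 < p ^ e := by
    calc 1 < p := by omega
    _ ≤ p ^ e := Nat.le_self_pow (by omega) p
  refine ⟨?_, ?_, ?_⟩
  · -- the algebraic identity
    have hu : (C (C ((2:K)⁻¹)) : Polynomial (Polynomial K)) * 2 = 1 := by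
      have : (2 : Polynomial (Polynomial K)) = C (C 2) := by simp [map_ofNat]
      rw [this, ← map_mul, ← map_mul, inv_mul_cancel₀ h2, map_one, map_one]
    simp only [map_add, map_sub, map_mul, map_pow]
    linear_combination
      (((C (X : Polynomial K) : Polynomial (Polynomial K))^(p^e) + C (X : Polynomial K)) * X
        + (C (C ((2:K)⁻¹)) * 2 + 1) * C (X : Polynomial K)^(p^e) * C (X : Polynomial K)) * hu
  · -- x^q + x is not constant
    rintro ⟨k, hk⟩
    have := congrArg (fun f => coeff f 1) hk
    simp [coeff_X_pow, Nat.ne_of_gt hq, (Nat.ne_of_gt hq).symm] at this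
  · -- F is not a square of a linear polynomial
    rintro ⟨ν, hk⟩
    set a : RatFunc K := algebraMap (Polynomial K) (RatFunc K) ((X : Polynomial K) ^ (p ^ e) + X)
      with ha
    set b : RatFunc K := algebraMap (Polynomial K) (RatFunc K) ((X : Polynomial K) ^ (p ^ e + 1))
      with hb
    have hk2 : (X ^ 2 + C a * X + C b : Polynomial (RatFunc K))
        = X ^ 2 + C (2 * ν) * X + C (ν ^ 2) := by
      rw [hk, add_sq]; simp [map_mul, map_pow, map_ofNat]; ring
    have h1 : a = 2 * ν := by
      have := congrArg (fun f => coeff f 1) hk2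
      simp only [coeff_add, coeff_C_mul, coeff_X_pow, coeff_X_one, coeff_X_zero, mul_one,
        mul_zero, coeff_C] at this
      norm_num at this
      exact this
    have h0 : b = ν ^ 2 := by
      have := congrArg (fun f => coeff f 0) hk2
      simp only [coeff_add, coeff_C_mul, coeff_X_pow, coeff_X_one, coeff_X_zero, mul_one,
        mul_zero, coeff_C] at this
      norm_num at this
      exact this
    have key : ((X : Polynomial K) ^ (p ^ e) + X)^2 = 4 * (X : Polynomial K) ^ (p ^ e + 1) := by
      apply IsFractionRing.injective (Polynomial K) (RatFunc K)
      rw [map_mul, map_pow, map_ofNat]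
      rw [← ha, ← hb, h1, h0]
      ring
    have key2 : ((X : Polynomial K) ^ (p ^ e) - X)^2 = 0 := by linear_combination key
    have key3 : (X : Polynomial K) ^ (p ^ e) - X = 0 := by
      exact pow_eq_zero_iff (by norm_num) |>.mp key2
    have := congrArg (fun f => coeff f (p ^ e)) key3
    simp [coeff_X_pow, coeff_X, Nat.ne_of_gt hq, (Nat.ne_of_gt hq).symm] at this
end
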